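/- arXiv:2211.00035 — 7 statements merged into one kernel-verified Lean document; each statement's English description precedes it below -/
import Mathlib

section
/- The objective function φ_ℓ is bounded below on E. -/
/-!
Since `‖α - x‖ - ‖x‖ ≥ max (‖α‖ - 2‖x‖) (-‖α‖)`, the integral is at least
`‖α‖ - 2R - 2‖α‖ μ{‖x‖ > R}` for every `R ≥ 0`. Choosing `R` so large that the tail
`μ{‖x‖ > R}` is at most `(1 - ‖ℓ‖)/2`, the linear growth of this bound beats `ℓ α ≤ ‖ℓ‖‖α‖`,
leaving the lower bound `-2R`.
-/

open MeasureTheory Filter Topology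

theorem tendsto_measureReal_setOf_lt_atTop {α : Type*} [MeasurableSpace α] (μ : Measure α)
    [IsFiniteMeasure μ] {f : α → ℝ} (hf : Measurable f) :
    Tendsto (fun r : ℝ => μ.real {x | r < f x}) atTop (𝓝 0) := by
  have hanti : Antitone fun r : ℝ => {x | r < f x} :=
    fun r s hrs x hx => lt_of_le_of_lt hrs hx
  have hempty : (⋂ r : ℝ, {x | r < f x}) = ∅ := by
    ext x
    simpa using ⟨f x, le_rfl⟩
  have h := tendsto_measure_iInter_atTop (μ := μ)
    (fun r => (measurableSet_lt measurable_const hf).nullMeasurableSet) hanti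
    ⟨0, measure_ne_top μ _⟩
  rw [hempty, measure_empty] at h
  exact (ENNReal.tendsto_toReal ENNReal.zero_ne_top).comp h

section NormedGroup

variable {E : Type*} [NormedAddCommGroup E]

theorem abs_norm_sub_sub_norm_le (α x : E) : |‖α - x‖ - ‖x‖| ≤ ‖α‖ := by
  simpa using abs_norm_sub_norm_le (α - x) (-x)

theorem norm_sub_two_mul_sub_indicator_le_norm_sub_sub_norm {R : ℝ} (hR : 0 ≤ R) (α x : E) :
    ‖α‖ - 2 * R - {y : E | R < ‖y‖}.indicator (fun _ => 2 * ‖α‖) x ≤ ‖α - x‖ - ‖x‖ := by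
  have hlower := (abs_le.mp (abs_norm_sub_sub_norm_le α x)).1
  by_cases hx : R < ‖x‖
  · rw [Set.indicator_of_mem (show x ∈ {y : E | R < ‖y‖} from hx)]
    linarith
  · rw [Set.indicator_of_notMem (show x ∉ {y : E | R < ‖y‖} from hx)]
    linarith [norm_sub_norm_le α x, not_lt.mp hx]

variable [MeasurableSpace E] [OpensMeasurableSpace E]

theorem integrable_norm_sub_sub_norm (μ : Measure E) [IsFiniteMeasure μ] (α : E) :
    Integrable (fun x => ‖α - x‖ - ‖x‖) μ :=
  Integrable.of_bound (by fun_prop) ‖α‖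
    (Eventually.of_forall fun x => (abs_norm_sub_sub_norm_le α x))

theorem norm_sub_two_mul_sub_le_integral_norm_sub_sub_norm (μ : Measure E)
    [IsProbabilityMeasure μ] {R : ℝ} (hR : 0 ≤ R) (α : E) :
    ‖α‖ - 2 * R - 2 * ‖α‖ * μ.real {x | R < ‖x‖} ≤ ∫ x, (‖α - x‖ - ‖x‖) ∂μ := by
  have hs : MeasurableSet {x : E | R < ‖x‖} := measurableSet_lt measurable_const measurable_norm
  have hlower : ∫ x, (‖α‖ - 2 * R - {y : E | R < ‖y‖}.indicator (fun _ => 2 * ‖α‖) x) ∂μ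
      = ‖α‖ - 2 * R - 2 * ‖α‖ * μ.real {x | R < ‖x‖} := by
    rw [integral_sub (integrable_const _) ((integrable_const _).indicator hs),
      integral_indicator_const _ hs]
    simp [mul_comm]
  rw [← hlower]
  exact integral_mono ((integrable_const _).sub ((integrable_const _).indicator hs))
    (integrable_norm_sub_sub_norm μ α) (norm_sub_two_mul_sub_indicator_le_norm_sub_sub_norm hR α)

end NormedGroup

/-- The objective function `φ_ℓ` is bounded below on `E`. -/
theorem stmt2 {E : Type*} [NormedAddCommGroup E] [NormedSpace ℝ E]
    [MeasurableSpace E] [BorelSpace E]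
    (μ : Measure E) [IsProbabilityMeasure μ]
    (ℓ : E →L[ℝ] ℝ) (hℓ : ‖ℓ‖ < 1) :
    BddBelow (Set.range (fun α : E => (∫ x, (‖α - x‖ - ‖x‖) ∂μ) - ℓ α)) := by
  obtain ⟨R, hR0, hRtail⟩ : ∃ R : ℝ, 0 ≤ R ∧ μ.real {x | R < ‖x‖} ≤ (1 - ‖ℓ‖) / 2 :=
    (((tendsto_measureReal_setOf_lt_atTop μ measurable_norm).eventually
      (ge_mem_nhds (by linarith))).and (eventually_ge_atTop 0)).exists.imp fun _ h => h.symm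
  refine ⟨-(2 * R), ?_⟩
  rintro _ ⟨α, rfl⟩
  have hintegral := norm_sub_two_mul_sub_le_integral_norm_sub_sub_norm μ hR0 α
  have hℓα : ℓ α ≤ ‖ℓ‖ * ‖α‖ := (le_abs_self _).trans (ℓ.le_opNorm α)
  have hgrowth : 0 ≤ ‖α‖ * (1 - 2 * μ.real {x | R < ‖x‖} - ‖ℓ‖) :=
    mul_nonneg (norm_nonneg α) (by linarith)
  linarith
end

section
/- Let X be a real random variable with law μ, ℓ ∈ (-1,1), p = (1+ℓ)/2, and φ(α) = E[|α - X| - |X|] - ℓα. Then α minimizes φ if and only if P(X ≤ α) ≥ p and P(X ≥ α) ≥ 1 - p. Moreover the set of minimizers is a nonempty closed bounded interval. -/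
/-!
For `a ≤ b` the increment `|b - x| - |a - x|` equals `b - a` for `x ≤ a`, equals `a - b` for
`x ≥ b`, and lies between these values otherwise. Integrating, `φ b - φ a` is at least
`(b - a) (2 P(X ≤ a) - 1 - ℓ)` and at most `(b - a) (1 - ℓ - 2 P(X ≥ b))`. Hence `α` is a
minimizer as soon as `P(X ≤ α) ≥ p` and `P(X ≥ α) ≥ 1 - p`; conversely, by right continuity of
`t ↦ P(X ≤ t)` and left continuity of `t ↦ P(X ≥ t)`, a failure of either condition at `α`
persists at a nearby point, which is then strictly better than `α`.

The minimizers thus form the intersection of the closed ray `{P(X ≤ ·) ≥ p} = [a, ∞)` with the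
closed ray `{P(X ≥ ·) ≥ 1 - p} = (-∞, b]`. These meet: if `P(X ≥ a) < 1 - p`, the same would hold
at some `c < a`, forcing `P(X ≤ c) > p` and contradicting the minimality of `a`.
-/

open MeasureTheory Set Filter Topology

theorem Monotone.exists_setOf_le_eq_Ici {α β : Type*} [ConditionallyCompleteLinearOrder α]
    [LinearOrder β] {f : α → β} {c : β} (hf : Monotone f)
    (hright : ∀ x, f x < c → ∃ y > x, f y < c) (hne : ∃ x, c ≤ f x) (hlt : ∃ x, f x < c) :
    ∃ a, {x | c ≤ f x} = Ici a := by
  obtain ⟨l, hl⟩ := hlt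
  have hbdd : BddBelow {x | c ≤ f x} :=
    ⟨l, fun x hx => le_of_not_gt fun hxl => ((hf hxl.le).trans_lt hl).not_ge hx⟩
  refine ⟨sInf {x | c ≤ f x}, Set.ext fun x => ⟨fun hx => csInf_le hbdd hx, fun hx => ?_⟩⟩
  by_contra hcx
  obtain ⟨y, hxy, hy⟩ := hright x (lt_of_not_ge hcx)
  obtain ⟨z, hz, hzy⟩ := (csInf_lt_iff hbdd hne).1 (hx.trans_lt hxy)
  exact ((hf hzy.le).trans_lt hy).not_ge hz

theorem Antitone.exists_setOf_le_eq_Iic {α β : Type*} [ConditionallyCompleteLinearOrder α]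
    [LinearOrder β] {f : α → β} {c : β} (hf : Antitone f)
    (hleft : ∀ x, f x < c → ∃ y < x, f y < c) (hne : ∃ x, c ≤ f x) (hlt : ∃ x, f x < c) :
    ∃ b, {x | c ≤ f x} = Iic b :=
  Monotone.exists_setOf_le_eq_Ici (α := αᵒᵈ) hf.dual_left hleft hne hlt

theorem integral_indicator_const_add {Ω : Type*} [MeasurableSpace Ω] (μ : Measure Ω)
    [IsProbabilityMeasure μ] {s : Set Ω} (hs : MeasurableSet s) (c d : ℝ) :
    ∫ x, (s.indicator (fun _ => c) x + d) ∂μ = μ.real s * c + d := by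
  rw [integral_add ((integrable_const c).indicator hs) (integrable_const d),
    integral_indicator_const c hs]
  simp

section LinearOrder

variable {α : Type*} [LinearOrder α] [MeasurableSpace α]

theorem one_le_measureReal_Iic_add_Ici (μ : Measure α) [IsProbabilityMeasure μ] (x : α) :
    1 ≤ μ.real (Iic x) + μ.real (Ici x) := by
  simpa [Iic_union_Ici] using measureReal_union_le (μ := μ) (Iic x) (Ici x)

theorem measureReal_Iic_add_Ici_le_one [TopologicalSpace α] [OrderClosedTopology α]
    [OpensMeasurableSpace α] (μ : Measure α) [IsProbabilityMeasure μ] {x y : α} (h : x < y) :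
    μ.real (Iic x) + μ.real (Ici y) ≤ 1 := by
  rw [← measureReal_union (Iic_disjoint_Ici.2 (not_le.2 h)) measurableSet_Ici]
  exact measureReal_le_one

variable [TopologicalSpace α] [OrderTopology α] [DenselyOrdered α] [FirstCountableTopology α]
  [OpensMeasurableSpace α] (μ : Measure α) [IsFiniteMeasure μ]

theorem tendsto_measure_Iic_nhdsGT [NoMaxOrder α] (x : α) :
    Tendsto (fun y => μ (Iic y)) (𝓝[>] x) (𝓝 (μ (Iic x))) := by
  have hInter : ⋂ y > x, Iic y = Iic x := by
    ext z
    simp only [mem_iInter, mem_Iic]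
    exact ⟨le_of_forall_gt_imp_ge_of_dense, fun h y hy => h.trans hy.le⟩
  obtain ⟨y, hy⟩ := exists_gt x
  have := tendsto_measure_biInter_gt (μ := μ) (s := Iic)
    (fun _ _ => measurableSet_Iic.nullMeasurableSet) (fun _ _ _ => Iic_subset_Iic.2)
    ⟨y, hy, measure_ne_top μ _⟩
  rwa [hInter] at this

theorem exists_gt_measureReal_Iic_lt [NoMaxOrder α] {x : α} {r : ℝ} (h : μ.real (Iic x) < r) :
    ∃ y > x, μ.real (Iic y) < r :=
  (((ENNReal.tendsto_toReal (measure_ne_top μ _)).comp (tendsto_measure_Iic_nhdsGT μ x)).eventually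
    (gt_mem_nhds h) |>.and self_mem_nhdsWithin).exists.imp fun _ hy => ⟨hy.2, hy.1⟩

theorem exists_lt_measureReal_Ici_lt [NoMinOrder α] {x : α} {r : ℝ} (h : μ.real (Ici x) < r) :
    ∃ y < x, μ.real (Ici y) < r := by
  let ν : Measure αᵒᵈ := μ
  have : IsFiniteMeasure ν := ‹_›
  exact exists_gt_measureReal_Iic_lt ν (x := OrderDual.toDual x) h

end LinearOrder

theorem integrable_abs_sub_sub_abs_sub (μ : Measure ℝ) [IsFiniteMeasure μ] (a b : ℝ) :
    Integrable (fun x => |b - x| - |a - x|) μ :=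
  .of_bound (by fun_prop) |b - a| (ae_of_all _ fun x => by
    simpa using abs_abs_sub_abs_le_abs_sub (b - x) (a - x))

section Real

variable (μ : Measure ℝ) [IsProbabilityMeasure μ]

theorem mul_le_integral_abs_sub_sub_abs_sub {a b : ℝ} (hab : a ≤ b) :
    (b - a) * (2 * μ.real (Iic a) - 1) ≤ ∫ x, (|b - x| - |a - x|) ∂μ := by
  have hbound (x : ℝ) :
      (Iic a).indicator (fun _ => 2 * (b - a)) x + (a - b) ≤ |b - x| - |a - x| := by
    by_cases hx : x ∈ Iic a
    · rw [indicator_of_mem hx, abs_of_nonneg (sub_nonneg.2 (mem_Iic.1 hx)),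
        abs_of_nonneg (sub_nonneg.2 ((mem_Iic.1 hx).trans hab))]
      linarith
    · rw [indicator_of_notMem hx]
      linarith [abs_sub_le a b x, abs_of_nonpos (sub_nonpos.2 hab)]
  calc (b - a) * (2 * μ.real (Iic a) - 1)
      = ∫ x, ((Iic a).indicator (fun _ => 2 * (b - a)) x + (a - b)) ∂μ := by
        rw [integral_indicator_const_add μ measurableSet_Iic]; ring
    _ ≤ _ := integral_mono (((integrable_const _).indicator measurableSet_Iic).add
        (integrable_const _)) (integrable_abs_sub_sub_abs_sub μ a b) hbound

theorem integral_abs_sub_sub_abs_sub_le_mul {a b : ℝ} (hab : a ≤ b) :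
    ∫ x, (|b - x| - |a - x|) ∂μ ≤ (b - a) * (1 - 2 * μ.real (Ici b)) := by
  have hbound (x : ℝ) :
      |b - x| - |a - x| ≤ (Ici b).indicator (fun _ => -2 * (b - a)) x + (b - a) := by
    by_cases hx : x ∈ Ici b
    · rw [indicator_of_mem hx, abs_of_nonpos (sub_nonpos.2 (mem_Ici.1 hx)),
        abs_of_nonpos (sub_nonpos.2 (hab.trans (mem_Ici.1 hx)))]
      linarith
    · rw [indicator_of_notMem hx]
      linarith [abs_sub_le b a x, abs_of_nonneg (sub_nonneg.2 hab)]
  calc ∫ x, (|b - x| - |a - x|) ∂μ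
      ≤ ∫ x, ((Ici b).indicator (fun _ => -2 * (b - a)) x + (b - a)) ∂μ :=
        integral_mono (integrable_abs_sub_sub_abs_sub μ a b) (((integrable_const _).indicator
          measurableSet_Ici).add (integrable_const _)) hbound
    _ = (b - a) * (1 - 2 * μ.real (Ici b)) := by
        rw [integral_indicator_const_add μ measurableSet_Ici]; ring

-- Subtracting `|x|` keeps the integrand bounded by `|α|`, so `μ` needs no finite first moment.
noncomputable def quantileLoss (ℓ α : ℝ) : ℝ := ∫ x, (|α - x| - |x|) ∂μ - ℓ * α

def IsQuantile (q x : ℝ) : Prop := q ≤ μ.real (Iic x) ∧ 1 - q ≤ μ.real (Ici x)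

theorem quantileLoss_sub (ℓ a b : ℝ) :
    quantileLoss μ ℓ b - quantileLoss μ ℓ a = ∫ x, (|b - x| - |a - x|) ∂μ - ℓ * (b - a) := by
  have h := integral_sub (integrable_abs_sub_sub_abs_sub μ 0 b)
    (integrable_abs_sub_sub_abs_sub μ 0 a)
  simp only [zero_sub, abs_neg, sub_sub_sub_cancel_right] at h
  rw [quantileLoss, quantileLoss, h]
  ring

theorem mul_le_quantileLoss_sub (ℓ : ℝ) {a b : ℝ} (hab : a ≤ b) :
    (b - a) * (2 * μ.real (Iic a) - 1 - ℓ) ≤ quantileLoss μ ℓ b - quantileLoss μ ℓ a := by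
  rw [quantileLoss_sub]
  linarith [mul_le_integral_abs_sub_sub_abs_sub μ hab]

theorem quantileLoss_sub_le_mul (ℓ : ℝ) {a b : ℝ} (hab : a ≤ b) :
    quantileLoss μ ℓ b - quantileLoss μ ℓ a ≤ (b - a) * (1 - ℓ - 2 * μ.real (Ici b)) := by
  rw [quantileLoss_sub]
  linarith [integral_abs_sub_sub_abs_sub_le_mul μ hab]

theorem isMinOn_quantileLoss_iff (ℓ α : ℝ) :
    IsMinOn (quantileLoss μ ℓ) univ α ↔ IsQuantile μ ((1 + ℓ) / 2) α := by
  rw [isMinOn_univ_iff]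
  constructor
  · intro hmin
    constructor
    · by_contra! h
      obtain ⟨b, hαb, hb⟩ := exists_gt_measureReal_Iic_lt μ h
      nlinarith [hmin b, quantileLoss_sub_le_mul μ ℓ hαb.le,
        one_le_measureReal_Iic_add_Ici μ b]
    · by_contra! h
      obtain ⟨a, haα, ha⟩ := exists_lt_measureReal_Ici_lt μ h
      nlinarith [hmin a, mul_le_quantileLoss_sub μ ℓ haα.le,
        one_le_measureReal_Iic_add_Ici μ a]
  · rintro ⟨hF, hG⟩ β
    rcases le_total α β with h | h
    · nlinarith [mul_le_quantileLoss_sub μ ℓ h]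
    · nlinarith [quantileLoss_sub_le_mul μ ℓ h]

theorem exists_setOf_isQuantile_eq_Icc {q : ℝ} (hq0 : 0 < q) (hq1 : q < 1) :
    ∃ a b, a ≤ b ∧ {x | IsQuantile μ q x} = Icc a b := by
  have hF : Monotone fun x => μ.real (Iic x) := fun x y h => measureReal_mono (Iic_subset_Iic.2 h)
  have hG : Antitone fun x => μ.real (Ici x) := fun x y h => measureReal_mono (Ici_subset_Ici.2 h)
  obtain ⟨u, hu⟩ : ∃ u, q < μ.real (Iic u) := by
    simpa [ProbabilityTheory.cdf_eq_real] using
      ((ProbabilityTheory.tendsto_cdf_atTop μ).eventually (lt_mem_nhds hq1)).exists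
  obtain ⟨l, hl⟩ : ∃ l, μ.real (Iic l) < q := by
    simpa [ProbabilityTheory.cdf_eq_real] using
      ((ProbabilityTheory.tendsto_cdf_atBot μ).eventually (gt_mem_nhds hq0)).exists
  obtain ⟨a, hA⟩ := hF.exists_setOf_le_eq_Ici (fun _ => exists_gt_measureReal_Iic_lt μ)
    ⟨u, hu.le⟩ ⟨l, hl⟩
  obtain ⟨b, hB⟩ := hG.exists_setOf_le_eq_Iic (c := 1 - q) (fun _ => exists_lt_measureReal_Ici_lt μ)
    ⟨l, by linarith [one_le_measureReal_Iic_add_Ici μ l]⟩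
    ⟨u + 1, by linarith [measureReal_Iic_add_Ici_le_one μ (lt_add_one u)]⟩
  have hab : a ≤ b := by
    rw [← mem_Iic, ← hB, mem_ofPred_eq]
    by_contra! h
    obtain ⟨c, hca, hc⟩ := exists_lt_measureReal_Ici_lt μ h
    have hcA : c ∈ Ici a :=
      hA ▸ show q ≤ μ.real (Iic c) by linarith [one_le_measureReal_Iic_add_Ici μ c]
    exact hca.not_ge hcA
  exact ⟨a, b, hab, by rw [← Ici_inter_Iic, ← hA, ← hB]; rfl⟩

end Real

/-- In the univariate case, `α` minimizes `φ` iff `P(X ≤ α) ≥ p` and `P(X ≥ α) ≥ 1 - p`,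
and the set of minimizers is a nonempty closed bounded interval. -/
theorem stmt3 (μ : Measure ℝ) [IsProbabilityMeasure μ]
    (ℓ : ℝ) (hℓ : ℓ ∈ Set.Ioo (-1 : ℝ) 1)
    (p : ℝ) (hp : p = (1 + ℓ) / 2)
    (φ : ℝ → ℝ) (hφ : ∀ α, φ α = (∫ x, (|α - x| - |x|) ∂μ) - ℓ * α) :
    (∀ α : ℝ, IsMinOn φ Set.univ α ↔
      ENNReal.ofReal p ≤ μ (Set.Iic α) ∧ ENNReal.ofReal (1 - p) ≤ μ (Set.Ici α)) ∧
    ∃ a b : ℝ, a ≤ b ∧ {α | IsMinOn φ Set.univ α} = Set.Icc a b := by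
  obtain rfl : φ = quantileLoss μ ℓ := funext hφ
  have hmin (α : ℝ) : IsMinOn (quantileLoss μ ℓ) univ α ↔ IsQuantile μ p α :=
    hp ▸ isMinOn_quantileLoss_iff μ ℓ α
  refine ⟨fun α => (hmin α).trans ?_, ?_⟩
  · simp only [IsQuantile, ENNReal.ofReal_le_iff_le_toReal (measure_ne_top μ _), measureReal_def]
  · obtain ⟨a, b, hab, hIcc⟩ :=
      exists_setOf_isQuantile_eq_Icc μ (q := p) (by linarith [hℓ.1]) (by linarith [hℓ.2])
    exact ⟨a, b, hab, by simpa only [hmin] using hIcc⟩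
end

section
/- A Borel probability measure μ on ℝ has at least two geometric ℓ-quantiles if and only if there exist real numbers α₁ < α₂ with μ((-∞, α₁]) = p and μ([α₂, ∞)) = 1 - p, where p = (1+ℓ)/2. -/
open MeasureTheory Set

/-!
For `α < β` the increment `|β - x| - |α - x|` lies between `(β - α) (2·1{x ≤ α} - 1)` and
`(β - α) (2·1{x < β} - 1)`, so the slope of `φ` on `[α, β]` is squeezed between
`2 μ(-∞, α] - 1 - ℓ` and `2 μ(-∞, β) - 1 - ℓ`. Hence `c` minimizes `φ` as soon as
`μ(-∞, c) ≤ p ≤ μ(-∞, c]`, and conversely at every point `c` strictly between two minimizers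
both `μ(-∞, c)` and `μ(-∞, c]` equal `p`; two such points give `α₁ < α₂`.
-/

namespace GeometricQuantile

variable {μ : Measure ℝ}

lemma integrable_abs_sub_sub_abs_sub [IsFiniteMeasure μ] (a b : ℝ) :
    Integrable (fun x => |a - x| - |b - x|) μ := by
  refine Integrable.mono' (integrable_const |a - b|) (by fun_prop) (ae_of_all _ fun x => ?_)
  simpa using abs_abs_sub_abs_le_abs_sub (a - x) (b - x)

lemma mul_two_indicator_Iic_sub_one_le {α β : ℝ} (h : α ≤ β) (x : ℝ) :
    (β - α) * (2 * (Iic α).indicator 1 x - 1) ≤ |β - x| - |α - x| := by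
  by_cases hx : x ≤ α <;> simp [indicator, hx] <;>
    cases abs_cases (β - x) <;> cases abs_cases (α - x) <;> linarith

lemma abs_sub_sub_abs_sub_le_mul_two_indicator_Iio_sub_one {α β : ℝ} (h : α ≤ β) (x : ℝ) :
    |β - x| - |α - x| ≤ (β - α) * (2 * (Iio β).indicator 1 x - 1) := by
  by_cases hx : x < β <;> simp [indicator, hx] <;>
    cases abs_cases (β - x) <;> cases abs_cases (α - x) <;> linarith

section FiniteMeasure

variable [IsFiniteMeasure μ] {α β : ℝ}

lemma integrable_indicator_one {s : Set ℝ} (hs : MeasurableSet s) :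
    Integrable (s.indicator (1 : ℝ → ℝ)) μ :=
  (integrable_const 1).indicator hs

lemma integrable_two_mul_indicator_one_sub_one {s : Set ℝ} (hs : MeasurableSet s) :
    Integrable (fun x => 2 * s.indicator (1 : ℝ → ℝ) x - 1) μ :=
  ((integrable_indicator_one hs).const_mul 2).sub (integrable_const 1)

lemma integral_two_mul_indicator_one_sub_one {s : Set ℝ} (hs : MeasurableSet s) :
    ∫ x, (2 * s.indicator (1 : ℝ → ℝ) x - 1) ∂μ = 2 * μ.real s - μ.real univ := by
  rw [integral_sub ((integrable_indicator_one hs).const_mul 2) (integrable_const 1),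
    integral_const_mul, integral_indicator_one hs]
  simp

lemma mul_two_measureReal_Iic_sub_le_integral (h : α ≤ β) :
    (β - α) * (2 * μ.real (Iic α) - μ.real univ) ≤ ∫ x, (|β - x| - |α - x|) ∂μ := by
  rw [← integral_two_mul_indicator_one_sub_one measurableSet_Iic, ← integral_const_mul]
  exact integral_mono ((integrable_two_mul_indicator_one_sub_one measurableSet_Iic).const_mul _)
    (integrable_abs_sub_sub_abs_sub β α) (mul_two_indicator_Iic_sub_one_le h)

lemma integral_le_mul_two_measureReal_Iio_sub (h : α ≤ β) :
    ∫ x, (|β - x| - |α - x|) ∂μ ≤ (β - α) * (2 * μ.real (Iio β) - μ.real univ) := by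
  rw [← integral_two_mul_indicator_one_sub_one measurableSet_Iio, ← integral_const_mul]
  exact integral_mono (integrable_abs_sub_sub_abs_sub β α)
    ((integrable_two_mul_indicator_one_sub_one measurableSet_Iio).const_mul _)
    (abs_sub_sub_abs_sub_le_mul_two_indicator_Iio_sub_one h)

end FiniteMeasure

noncomputable def objective (μ : Measure ℝ) (ℓ α : ℝ) : ℝ :=
  ∫ x, (|α - x| - |x|) ∂μ - ℓ * α

lemma objective_sub_objective [IsFiniteMeasure μ] (ℓ α β : ℝ) :
    objective μ ℓ β - objective μ ℓ α = ∫ x, (|β - x| - |α - x|) ∂μ - ℓ * (β - α) := by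
  have hint : ∫ x, (|β - x| - |x|) ∂μ - ∫ x, (|α - x| - |x|) ∂μ = ∫ x, (|β - x| - |α - x|) ∂μ := by
    rw [← integral_sub (by simpa using integrable_abs_sub_sub_abs_sub β 0)
      (by simpa using integrable_abs_sub_sub_abs_sub α 0)]
    simp
  rw [objective, objective, ← hint]
  ring

section ProbabilityMeasure

variable [IsProbabilityMeasure μ] {ℓ α β : ℝ}

lemma mul_sub_le_objective_sub_objective (h : α ≤ β) :
    (β - α) * (2 * μ.real (Iic α) - 1 - ℓ) ≤ objective μ ℓ β - objective μ ℓ α := by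
  have := mul_two_measureReal_Iic_sub_le_integral (μ := μ) h
  rw [probReal_univ] at this
  rw [objective_sub_objective]
  linarith

lemma objective_sub_objective_le_mul_sub (h : α ≤ β) :
    objective μ ℓ β - objective μ ℓ α ≤ (β - α) * (2 * μ.real (Iio β) - 1 - ℓ) := by
  have := integral_le_mul_two_measureReal_Iio_sub (μ := μ) h
  rw [probReal_univ] at this
  rw [objective_sub_objective]
  linarith

lemma isMinOn_objective {c : ℝ} (hIio : μ.real (Iio c) ≤ (1 + ℓ) / 2)
    (hIic : (1 + ℓ) / 2 ≤ μ.real (Iic c)) : IsMinOn (objective μ ℓ) univ c := by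
  refine isMinOn_univ_iff.2 fun x => sub_nonneg.1 ?_
  rcases le_total c x with hcx | hxc
  · exact (mul_nonneg (sub_nonneg.2 hcx) (by linarith)).trans
      (mul_sub_le_objective_sub_objective hcx)
  · have hslope : 2 * μ.real (Iio c) - 1 - ℓ ≤ 0 := by linarith
    linarith [objective_sub_objective_le_mul_sub (μ := μ) (ℓ := ℓ) hxc,
      mul_nonpos_of_nonneg_of_nonpos (sub_nonneg.2 hxc) hslope]

lemma measureReal_Iio_eq_and_measureReal_Iic_eq_of_isMinOn {a b c : ℝ} (hac : a < c) (hcb : c < b)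
    (ha : IsMinOn (objective μ ℓ) univ a) (hb : IsMinOn (objective μ ℓ) univ b) :
    μ.real (Iio c) = (1 + ℓ) / 2 ∧ μ.real (Iic c) = (1 + ℓ) / 2 := by
  have hIio : 0 ≤ 2 * μ.real (Iio c) - 1 - ℓ :=
    (mul_nonneg_iff_of_pos_left (sub_pos.2 hac)).1 <| (sub_nonneg.2 (isMinOn_univ_iff.1 ha c)).trans
      (objective_sub_objective_le_mul_sub hac.le)
  have hIic : 0 ≤ 1 + ℓ - 2 * μ.real (Iic c) := by
    refine (mul_nonneg_iff_of_pos_left (sub_pos.2 hcb)).1 ?_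
    linarith [mul_sub_le_objective_sub_objective (μ := μ) (ℓ := ℓ) hcb.le, isMinOn_univ_iff.1 hb c]
  have hmono : μ.real (Iio c) ≤ μ.real (Iic c) := measureReal_mono Iio_subset_Iic_self
  constructor <;> linarith

end ProbabilityMeasure

end GeometricQuantile

open GeometricQuantile in
/-- `μ` has at least two geometric `ℓ`-quantiles iff there exist `α₁ < α₂` with
`μ((-∞, α₁]) = p` and `μ([α₂, ∞)) = 1 - p`, where `p = (1 + ℓ)/2`. -/
theorem stmt4 (μ : Measure ℝ) [IsProbabilityMeasure μ]
    (ℓ : ℝ) (hℓ : ℓ ∈ Set.Ioo (-1 : ℝ) 1)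
    (p : ℝ) (hp : p = (1 + ℓ) / 2)
    (φ : ℝ → ℝ) (hφ : ∀ α, φ α = (∫ x, (|α - x| - |x|) ∂μ) - ℓ * α) :
    (∃ a b : ℝ, a ≠ b ∧ IsMinOn φ Set.univ a ∧ IsMinOn φ Set.univ b) ↔
      ∃ α₁ α₂ : ℝ, α₁ < α₂ ∧ μ (Set.Iic α₁) = ENNReal.ofReal p ∧
        μ (Set.Ici α₂) = ENNReal.ofReal (1 - p) := by
  obtain rfl : φ = objective μ ℓ := funext hφ
  subst hp
  constructor
  · rintro ⟨a, b, hne, ha, hb⟩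
    wlog hab : a < b generalizing a b
    · exact this b a hne.symm hb ha (hne.lt_or_gt.resolve_left hab)
    obtain ⟨α₁, haα₁, hα₁b⟩ := exists_between hab
    obtain ⟨α₂, hα₁α₂, hα₂b⟩ := exists_between hα₁b
    obtain ⟨-, hα₁⟩ := measureReal_Iio_eq_and_measureReal_Iic_eq_of_isMinOn haα₁ hα₁b ha hb
    obtain ⟨hα₂, -⟩ :=
      measureReal_Iio_eq_and_measureReal_Iic_eq_of_isMinOn (haα₁.trans hα₁α₂) hα₂b ha hb
    refine ⟨α₁, α₂, hα₁α₂, ?_, ?_⟩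
    · rw [← ofReal_measureReal, hα₁]
    · rw [← ofReal_measureReal, ← compl_Iio, probReal_compl_eq_one_sub measurableSet_Iio, hα₂]
  · rintro ⟨α₁, α₂, hα₁α₂, hα₁, hα₂⟩
    obtain ⟨hℓ₁, hℓ₂⟩ := hℓ
    have hIic : μ.real (Iic α₁) = (1 + ℓ) / 2 := by
      rw [measureReal_def, hα₁, ENNReal.toReal_ofReal (by linarith)]
    have hIio : μ.real (Iio α₂) = (1 + ℓ) / 2 := by
      have hIci : μ.real (Ici α₂) = 1 - (1 + ℓ) / 2 := by
        rw [measureReal_def, hα₂, ENNReal.toReal_ofReal (by linarith)]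
      rw [← compl_Ici, probReal_compl_eq_one_sub measurableSet_Ici, hIci]
      ring
    refine ⟨α₁, α₂, hα₁α₂.ne, isMinOn_objective ?_ hIic.ge, isMinOn_objective hIio.le ?_⟩
    · exact (measureReal_mono Iio_subset_Iic_self).trans hIic.le
    · exact hIio.ge.trans (measureReal_mono Iio_subset_Iic_self)
end

section
/- Every Borel probability measure μ on a normed space E that is not concentrated on a line is uniformly separated from 1 on affine lines: there exists δ ∈ (0,1] such that μ(L) ≤ 1 - δ for every affine line L. -/
/-!
Two distinct affine lines meet in at most one point, so `μ L₁ + μ L₂ ≤ 1 + μ (L₁ ∩ L₂)` bounds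
the masses of two distinct lines by `1 + c`, where `c` bounds the atoms. Hence at most one line
has mass above `(1 + c) / 2`, and the supremum over lines is attained or at most `(1 + c) / 2`.
The same argument for singletons, which are pairwise disjoint, gives an atom bound `c < 1`.
-/

open MeasureTheory
open scoped ENNReal

theorem exists_lt_forall_le_of_subsingleton {α β : Type*} [LinearOrder β] {s : Set α}
    {f : α → β} {b c : β} (hbc : b < c) (hf : ∀ x ∈ s, f x < c)
    (hs : {x ∈ s | b < f x}.Subsingleton) : ∃ d < c, ∀ x ∈ s, f x ≤ d := by
  by_cases h : ∃ x ∈ s, b < f x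
  · obtain ⟨x, hx, hbx⟩ := h
    refine ⟨max (f x) b, max_lt (hf x hx) hbc, fun y hy => ?_⟩
    by_cases hby : b < f y
    · rw [hs ⟨hy, hby⟩ ⟨hx, hbx⟩]
      exact le_max_left _ _
    · exact le_max_of_le_right (not_lt.1 hby)
  · exact ⟨b, hbc, fun x hx => not_lt.1 fun hbx => h ⟨x, hx, hbx⟩⟩

theorem Set.Subsingleton.measure_le {α : Type*} [MeasurableSpace α] {μ : Measure α} {s : Set α}
    (hs : s.Subsingleton) {c : ℝ≥0∞} (h : ∀ x, μ {x} ≤ c) : μ s ≤ c := by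
  rcases hs.eq_empty_or_singleton with rfl | ⟨x, rfl⟩
  · simp
  · exact h x

section Measure

variable {α : Type*} [MeasurableSpace α] (μ : Measure α) [IsProbabilityMeasure μ]

theorem measure_add_measure_le_one_add_measure_inter {A B : Set α} (hB : MeasurableSet B) :
    μ A + μ B ≤ 1 + μ (A ∩ B) := by
  rw [← measure_union_add_inter A hB]
  exact add_le_add_left prob_le_one _

theorem exists_lt_one_forall_measure_le_of_measure_inter_le {S : Set (Set α)}
    (hS : ∀ A ∈ S, MeasurableSet A) {c : ℝ≥0∞} (hc : c < 1)
    (hinter : ∀ A ∈ S, ∀ B ∈ S, A ≠ B → μ (A ∩ B) ≤ c) (hlt : ∀ A ∈ S, μ A < 1) :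
    ∃ d < 1, ∀ A ∈ S, μ A ≤ d := by
  have hb : (1 + c) / 2 < 1 := by
    refine ENNReal.div_lt_of_lt_mul ?_
    rw [one_mul, ← one_add_one_eq_two]
    exact ENNReal.add_lt_add_left ENNReal.one_ne_top hc
  refine exists_lt_forall_le_of_subsingleton hb hlt ?_
  rintro A ⟨hA, hbA⟩ B ⟨hB, hbB⟩
  by_contra hAB
  have := calc
    1 + c = (1 + c) / 2 + (1 + c) / 2 := (ENNReal.add_halves _).symm
    _ < μ A + μ B := ENNReal.add_lt_add hbA hbB
    _ ≤ 1 + μ (A ∩ B) := measure_add_measure_le_one_add_measure_inter μ (hS B hB)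
    _ ≤ 1 + c := by gcongr; exact hinter A hA B hB hAB
  exact this.false

theorem exists_lt_one_forall_measure_singleton_le [MeasurableSingletonClass α]
    (h : ∀ x, μ {x} < 1) : ∃ c < 1, ∀ x, μ {x} ≤ c := by
  obtain ⟨c, hc, hle⟩ := exists_lt_one_forall_measure_le_of_measure_inter_le μ
    (S := Set.range singleton) (Set.forall_mem_range.2 measurableSet_singleton) zero_lt_one
    (by
      rintro _ ⟨x, rfl⟩ _ ⟨y, rfl⟩ hxy
      rw [Set.singleton_inter_eq_empty.2 (by simpa [eq_comm] using hxy), measure_empty])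
    (Set.forall_mem_range.2 h)
  exact ⟨c, hc, fun x => hle _ ⟨x, rfl⟩⟩

end Measure

section AffineLine

variable {E : Type*} [AddCommGroup E] [Module ℝ E]

def affineLine (u v : E) : Set E := Set.range fun t : ℝ => u + t • v

variable (E) in
def affineLines : Set (Set E) := {L | ∃ u v, v ≠ 0 ∧ L = affineLine u v}

theorem affineLine_reparam (u v : E) (a : ℝ) {c : ℝ} (hc : c ≠ 0) :
    affineLine (u + a • v) (c • v) = affineLine u v := by
  have hsurj : Function.Surjective fun t : ℝ => a + c * t :=
    fun s => ⟨(s - a) / c, by field_simp; ring⟩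
  rw [affineLine, affineLine, ← hsurj.range_comp fun s => u + s • v]
  congr 1
  funext t
  simp only [Function.comp_apply]
  module

theorem affineLine_eq_of_mem {u v x y : E} (hxy : x ≠ y) (hx : x ∈ affineLine u v)
    (hy : y ∈ affineLine u v) : affineLine u v = affineLine x (y - x) := by
  obtain ⟨a, rfl⟩ := hx
  obtain ⟨b, rfl⟩ := hy
  have hba : b - a ≠ 0 := fun h => hxy (by rw [sub_eq_zero.1 h])
  rw [show u + b • v - (u + a • v) = (b - a) • v by module, affineLine_reparam u v a hba]

theorem affineLine_inter_subsingleton {u v u' v' : E} (h : affineLine u v ≠ affineLine u' v') :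
    (affineLine u v ∩ affineLine u' v').Subsingleton := by
  intro x hx y hy
  by_contra hxy
  exact h ((affineLine_eq_of_mem hxy hx.1 hy.1).trans (affineLine_eq_of_mem hxy hx.2 hy.2).symm)

theorem affineLines_inter_subsingleton {L L' : Set E} (hL : L ∈ affineLines E)
    (hL' : L' ∈ affineLines E) (h : L ≠ L') : (L ∩ L').Subsingleton := by
  obtain ⟨u, v, -, rfl⟩ := hL
  obtain ⟨u', v', -, rfl⟩ := hL'
  exact affineLine_inter_subsingleton h

theorem mem_affineLine_self (u v : E) : u ∈ affineLine u v := ⟨0, by simp⟩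

theorem isClosed_affineLine [TopologicalSpace E] [IsTopologicalAddGroup E] [ContinuousSMul ℝ E]
    [T2Space E] (u v : E) : IsClosed (affineLine u v) := by
  rw [affineLine, show (fun t : ℝ => u + t • v) = (u + ·) ∘ (· • v) from rfl, Set.range_comp]
  exact (Homeomorph.addLeft u).isClosedMap _ (isClosedMap_smul_left v).isClosed_range

end AffineLine

/-- A Borel probability measure not concentrated on a line is uniformly separated from `1`
on affine lines: there exists `δ ∈ (0, 1]` with `μ(L) ≤ 1 - δ` for every affine line `L`. -/
theorem stmt11 {E : Type*} [NormedAddCommGroup E] [NormedSpace ℝ E]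
    [MeasurableSpace E] [BorelSpace E]
    (μ : Measure E) [IsProbabilityMeasure μ]
    (hμ : ∀ u v : E, v ≠ 0 → μ (Set.range fun t : ℝ => u + t • v) < 1) :
    ∃ δ : ℝ, δ ∈ Set.Ioc (0 : ℝ) 1 ∧ ∀ u v : E, v ≠ 0 →
      μ (Set.range fun t : ℝ => u + t • v) ≤ ENNReal.ofReal (1 - δ) := by
  rcases subsingleton_or_nontrivial E with hE | hE
  · exact ⟨1, by norm_num, fun u v hv => absurd (Subsingleton.elim v 0) hv⟩
  obtain ⟨v₀, hv₀⟩ := exists_ne (0 : E)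
  obtain ⟨c, hc, hatom⟩ := exists_lt_one_forall_measure_singleton_le μ fun x =>
    (measure_mono (Set.singleton_subset_iff.2 (mem_affineLine_self x v₀))).trans_lt (hμ x v₀ hv₀)
  have hlines : ∀ L ∈ affineLines E, MeasurableSet L ∧ μ L < 1 := by
    rintro _ ⟨u, v, hv, rfl⟩
    exact ⟨(isClosed_affineLine u v).measurableSet, hμ u v hv⟩
  obtain ⟨d, hd, hle⟩ := exists_lt_one_forall_measure_le_of_measure_inter_le μ
    (fun L hL => (hlines L hL).1) hc
    (fun L hL L' hL' h => (affineLines_inter_subsingleton hL hL' h).measure_le hatom)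
    (fun L hL => (hlines L hL).2)
  have hd' : d.toReal < 1 := by simpa using ENNReal.toReal_strict_mono ENNReal.one_ne_top hd
  refine ⟨1 - d.toReal, ⟨by linarith, by linarith [d.toReal_nonneg]⟩, fun u v hv => ?_⟩
  rw [sub_sub_cancel, ENNReal.ofReal_toReal hd.ne_top]
  exact hle _ ⟨u, v, hv, rfl⟩
end

section
/- In a real Hilbert space E, for every nonzero α and every h, the second-order Taylor remainder of the norm satisfies |‖α + h‖ - ‖α‖ - ⟨α/‖α‖, h⟩ - (1/2)(‖h‖² - ⟨α, h⟩²/‖α‖²)/‖α‖| ≤ (1/2) min(‖h‖²/‖α‖, ‖h‖³/‖α‖²). -/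
/-!
Write `a = ‖α‖`, `n = ‖h‖`, `d = ‖α + h‖ - ‖α‖` and `y = ⟪α, h⟫ / ‖α‖`. Expanding
`‖α + h‖² = ‖α‖² + 2⟪α, h⟫ + ‖h‖²` gives `2a (d - y) = n² - d²`, and with it the remainder
becomes `(y² - d²) / (2a)`. Both `|y|` and `|d|` are at most `n` (Cauchy–Schwarz and the triangle
inequality), so `|y² - d²| ≤ n²`; and `|y² - d²| = |d - y| |d + y| ≤ n² / (2a) · 2n`.
-/

open scoped RealInnerProductSpace

section Scalar

variable {a d y n : ℝ}

lemma abs_sq_sub_sq_le_sq (hy : |y| ≤ n) (hd : |d| ≤ n) : |y ^ 2 - d ^ 2| ≤ n ^ 2 :=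
  abs_sub_le_of_nonneg_of_le (sq_nonneg y) (sq_le_sq' (abs_le.mp hy).1 (abs_le.mp hy).2)
    (sq_nonneg d) (sq_le_sq' (abs_le.mp hd).1 (abs_le.mp hd).2)

lemma abs_sq_sub_sq_le_cube_div (ha : 0 < a) (hy : |y| ≤ n) (hd : |d| ≤ n)
    (hrel : 2 * a * (d - y) = n ^ 2 - d ^ 2) : |y ^ 2 - d ^ 2| ≤ n ^ 3 / a := by
  have hn : 0 ≤ n := (abs_nonneg y).trans hy
  have hdy : |d - y| = |n ^ 2 - d ^ 2| / (2 * a) := by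
    rw [← hrel, abs_mul, abs_of_pos (by positivity : 0 < 2 * a)]
    field_simp
  calc |y ^ 2 - d ^ 2| = |d - y| * |d + y| := by
        rw [← abs_mul, ← abs_neg]; ring_nf
    _ ≤ n ^ 2 / (2 * a) * (2 * n) := by
        rw [hdy]
        gcongr
        · exact abs_sq_sub_sq_le_sq (abs_of_nonneg hn).le hd
        · exact (abs_add_le d y).trans (by linarith)
    _ = n ^ 3 / a := by field_simp

lemma abs_taylor_remainder_le (ha : 0 < a) (hy : |y| ≤ n) (hd : |d| ≤ n)
    (hrel : 2 * a * (d - y) = n ^ 2 - d ^ 2) :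
    |d - y - (1 / 2) * ((n ^ 2 - y ^ 2) / a)| ≤ (1 / 2) * min (n ^ 2 / a) (n ^ 3 / a ^ 2) := by
  have hrem : d - y - (1 / 2) * ((n ^ 2 - y ^ 2) / a) = (y ^ 2 - d ^ 2) / (2 * a) := by
    field_simp
    linear_combination hrel
  rw [hrem, abs_div, abs_of_pos (by positivity : 0 < 2 * a),
    mul_min_of_nonneg _ _ (by norm_num : (0 : ℝ) ≤ 1 / 2), le_min_iff]
  constructor
  · calc |y ^ 2 - d ^ 2| / (2 * a) ≤ n ^ 2 / (2 * a) := by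
          gcongr; exact abs_sq_sub_sq_le_sq hy hd
      _ = 1 / 2 * (n ^ 2 / a) := by ring
  · calc |y ^ 2 - d ^ 2| / (2 * a) ≤ n ^ 3 / a / (2 * a) := by
          gcongr; exact abs_sq_sub_sq_le_cube_div ha hy hd hrel
      _ = 1 / 2 * (n ^ 3 / a ^ 2) := by field_simp

end Scalar

lemma two_mul_norm_mul_norm_add_sub {E : Type*} [NormedAddCommGroup E] [InnerProductSpace ℝ E]
    {α : E} (hα : α ≠ 0) (h : E) :
    2 * ‖α‖ * (‖α + h‖ - ‖α‖ - ⟪α, h⟫ / ‖α‖) = ‖h‖ ^ 2 - (‖α + h‖ - ‖α‖) ^ 2 := by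
  have ha : ‖α‖ ≠ 0 := norm_ne_zero_iff.mpr hα
  field_simp
  linear_combination norm_add_sq_real α h

/-- Second-order Taylor remainder bound for the norm in a real inner product space. -/
theorem stmt16 {E : Type*} [NormedAddCommGroup E] [InnerProductSpace ℝ E]
    (α h : E) (hα : α ≠ 0) :
    |‖α + h‖ - ‖α‖ - ⟪α, h⟫ / ‖α‖ -
        (1 / 2) * ((‖h‖ ^ 2 - ⟪α, h⟫ ^ 2 / ‖α‖ ^ 2) / ‖α‖)| ≤
      (1 / 2) * min (‖h‖ ^ 2 / ‖α‖) (‖h‖ ^ 3 / ‖α‖ ^ 2) := by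
  have ha : 0 < ‖α‖ := norm_pos_iff.mpr hα
  have hy : |⟪α, h⟫ / ‖α‖| ≤ ‖h‖ := by
    rw [abs_div, abs_norm, div_le_iff₀' ha]
    exact abs_real_inner_le_norm α h
  have hd : |‖α + h‖ - ‖α‖| ≤ ‖h‖ := by
    simpa using abs_norm_sub_norm_le (α + h) α
  rw [← div_pow]
  exact abs_taylor_remainder_le ha hy hd (two_mul_norm_mul_norm_add_sub hα h)
end

section
/- In a real Hilbert space E, for every nonzero α and every h with α + h ≠ 0, the first-order Taylor remainder of the gradient of the norm satisfies ‖(α+h)/‖α+h‖ - α/‖α‖ - ∇²N(α)h‖ ≤ 2 min(‖h‖/‖α‖, ‖h‖²/‖α‖²), where ∇²N(α)h = (h - ⟨h,α⟩α/‖α‖²)/‖α‖. -/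
/-!
Put `u = α / ‖α‖`, `w = (α + h) / ‖α + h‖` and `β = ‖α + h‖ / ‖α‖`, so that `h / ‖α‖ = β w - u`
and the remainder is `w - u - (k - ⟪k, u⟫ u)` with `k = β w - u`. With `c = ⟪w, u⟫` its squared
norm is `(1 - c) ((1 - c) + (1 - β)² (1 + c))`. Both factors are at most `2 ‖k‖²`, and the first
is at most `2`; this gives the bounds `2 ‖k‖` and `2 ‖k‖²` at once.
-/

open scoped RealInnerProductSpace

lemma mul_le_sq_two_mul_min {y z r : ℝ} (hy : 0 ≤ y) (hy₂ : y ≤ 2) (hyr : y ≤ 2 * r ^ 2)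
    (hz : z ≤ 2 * r ^ 2) : y * z ≤ (2 * min r (r ^ 2)) ^ 2 := by
  have hyz : y * z ≤ y * (2 * r ^ 2) := mul_le_mul_of_nonneg_left hz hy
  rcases min_cases r (r ^ 2) with ⟨hmin, -⟩ | ⟨hmin, -⟩ <;> rw [hmin]
  · nlinarith [mul_le_mul_of_nonneg_right hy₂ (sq_nonneg r)]
  · nlinarith [mul_le_mul_of_nonneg_right hyr (sq_nonneg r)]

section UnitVectors

variable {E : Type*} [NormedAddCommGroup E] [InnerProductSpace ℝ E] {u w : E}

lemma norm_smul_sub_sq_of_norm_eq_one (hu : ‖u‖ = 1) (hw : ‖w‖ = 1) (β : ℝ) :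
    ‖β • w - u‖ ^ 2 = β ^ 2 - 2 * β * ⟪w, u⟫ + 1 := by
  rw [norm_sub_sq_real, norm_smul, real_inner_smul_left, hu, hw, Real.norm_eq_abs, mul_one,
    sq_abs]
  ring

lemma norm_sq_unit_taylor_remainder (hu : ‖u‖ = 1) (hw : ‖w‖ = 1) (β : ℝ) :
    ‖w - u - (β • w - u - ⟪β • w - u, u⟫ • u)‖ ^ 2 =
      (1 - ⟪w, u⟫) * ((1 - ⟪w, u⟫) + (1 - β) ^ 2 * (1 + ⟪w, u⟫)) := by
  have hrem : w - u - (β • w - u - ⟪β • w - u, u⟫ • u) =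
      (1 - β) • w + (β * ⟪w, u⟫ - 1) • u := by
    rw [inner_sub_left, real_inner_smul_left, real_inner_self_eq_norm_sq, hu]
    module
  rw [hrem, norm_add_sq_real, norm_smul, norm_smul, real_inner_smul_left, real_inner_smul_right,
    hu, hw]
  simp only [Real.norm_eq_abs, mul_pow, sq_abs]
  ring

theorem norm_unit_taylor_remainder_le (hu : ‖u‖ = 1) (hw : ‖w‖ = 1) {β : ℝ} (hβ : 0 ≤ β) :
    ‖w - u - (β • w - u - ⟪β • w - u, u⟫ • u)‖ ≤
      2 * min ‖β • w - u‖ (‖β • w - u‖ ^ 2) := by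
  refine le_of_sq_le_sq ?_ (by positivity)
  have hc := abs_real_inner_le_norm w u
  rw [hu, hw, mul_one, abs_le] at hc
  rw [norm_sq_unit_taylor_remainder hu hw]
  have hk := norm_smul_sub_sq_of_norm_eq_one hu hw β
  refine mul_le_sq_two_mul_min (by linarith) (by linarith) ?_ ?_ <;> rw [hk]
  · nlinarith [sq_nonneg (β - ⟪w, u⟫), mul_nonneg hβ (sub_nonneg.2 hc.2)]
  · nlinarith [mul_nonneg (sub_nonneg.2 hc.2) (by positivity : 0 ≤ β ^ 2 + 2 * β)]

end UnitVectors

/-- First-order Taylor remainder bound for the gradient of the norm in a real inner product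
space. -/
theorem stmt17 {E : Type*} [NormedAddCommGroup E] [InnerProductSpace ℝ E]
    (α h : E) (hα : α ≠ 0) (hαh : α + h ≠ 0) :
    ‖‖α + h‖⁻¹ • (α + h) - ‖α‖⁻¹ • α -
        ‖α‖⁻¹ • (h - (⟪h, α⟫ / ‖α‖ ^ 2) • α)‖ ≤
      2 * min (‖h‖ / ‖α‖) (‖h‖ ^ 2 / ‖α‖ ^ 2) := by
  set u := ‖α‖⁻¹ • α
  set w := ‖α + h‖⁻¹ • (α + h)
  have hk : ‖α‖⁻¹ • h = (‖α + h‖ / ‖α‖) • w - u := by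
    have hβw : (‖α + h‖ / ‖α‖) * ‖α + h‖⁻¹ = ‖α‖⁻¹ := by field_simp
    rw [smul_smul, hβw, ← smul_sub, add_sub_cancel_left]
  have hrem : ‖α‖⁻¹ • (h - (⟪h, α⟫ / ‖α‖ ^ 2) • α) = ‖α‖⁻¹ • h - ⟪‖α‖⁻¹ • h, u⟫ • u := by
    simp only [u, real_inner_smul_left, real_inner_smul_right, smul_sub, smul_smul]
    congr 2
    ring
  have hnorm : ‖h‖ / ‖α‖ = ‖‖α‖⁻¹ • h‖ := by
    rw [norm_smul, norm_inv, norm_norm, inv_mul_eq_div]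
  rw [hrem, ← div_pow, hnorm, hk]
  exact norm_unit_taylor_remainder_le (norm_smul_inv_norm hα) (norm_smul_inv_norm hαh)
    (by positivity)
end

section
/- Let Y₁, Y₂, … be i.i.d. nonnegative random variables with E[Y₁] < ∞. Then (1/n) Σ_{i=1}^n 1{Y_i ≥ √n} Y_i converges to 0 almost surely. -/
/-!
Fix an integer level `k`. Once `√n ≥ k`, every summand with `Y_i ≥ √n` also has `Y_i ≥ k`, so by
nonnegativity the average is at most the average of `1{Y_i ≥ k} Y_i`, which by the strong law
converges almost surely to `E[1{Y₀ ≥ k} Y₀]`. As there are countably many levels, almost surely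
the limsup of the averages is at most `E[1{Y₀ ≥ k} Y₀]` for every `k`, and these expectations
tend to `0` by dominated convergence.
-/

open MeasureTheory Filter ProbabilityTheory Topology

noncomputable def upperTail (t x : ℝ) : ℝ := if t ≤ x then x else 0

lemma measurable_upperTail (t : ℝ) : Measurable (upperTail t) :=
  Measurable.ite (measurableSet_le measurable_const measurable_id) measurable_id measurable_const

lemma norm_upperTail_le (t x : ℝ) : ‖upperTail t x‖ ≤ ‖x‖ := by
  unfold upperTail
  split_ifs <;> simp

lemma upperTail_nonneg {x : ℝ} (hx : 0 ≤ x) (t : ℝ) : 0 ≤ upperTail t x := by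
  unfold upperTail
  split_ifs <;> simp [hx]

lemma antitone_upperTail {x : ℝ} (hx : 0 ≤ x) : Antitone (upperTail · x) := by
  intro s t hst
  dsimp only [upperTail]
  split_ifs with ht hs
  · rfl
  · exact absurd (hst.trans ht) hs
  · exact hx
  · rfl

lemma upperTail_eventuallyEq_zero (x : ℝ) : (fun t ↦ upperTail t x) =ᶠ[atTop] fun _ ↦ 0 := by
  filter_upwards [eventually_gt_atTop x] with t ht
  simp [upperTail, ht.not_ge]

section

variable {Ω : Type*} [MeasurableSpace Ω] {μ : Measure Ω}

lemma MeasureTheory.Integrable.upperTail {X : Ω → ℝ} (hX : Integrable X μ) (t : ℝ) :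
    Integrable (fun ω ↦ upperTail t (X ω)) μ :=
  hX.mono ((measurable_upperTail t).comp_aemeasurable hX.aemeasurable).aestronglyMeasurable
    (ae_of_all _ fun ω ↦ norm_upperTail_le t (X ω))

lemma tendsto_integral_upperTail {X : Ω → ℝ} (hX : Integrable X μ) :
    Tendsto (fun t ↦ ∫ ω, upperTail t (X ω) ∂μ) atTop (𝓝 0) := by
  simpa using tendsto_integral_filter_of_dominated_convergence (fun ω ↦ ‖X ω‖)
    (Eventually.of_forall fun t ↦ (hX.upperTail t).aestronglyMeasurable)
    (Eventually.of_forall fun t ↦ ae_of_all _ fun ω ↦ norm_upperTail_le t (X ω)) hX.norm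
    (ae_of_all _ fun ω ↦ tendsto_const_nhds.congr' (upperTail_eventuallyEq_zero (X ω)).symm)

lemma strong_law_ae_comp {X : ℕ → Ω → ℝ} (hindep : Pairwise fun i j ↦ IndepFun (X i) (X j) μ)
    (hident : ∀ i, IdentDistrib (X i) (X 0) μ μ) {f : ℝ → ℝ} (hf : Measurable f)
    (hint : Integrable (fun ω ↦ f (X 0 ω)) μ) :
    ∀ᵐ ω ∂μ, Tendsto (fun n : ℕ ↦ (∑ i ∈ Finset.range n, f (X i ω)) / n) atTop
      (𝓝 (∫ ω, f (X 0 ω) ∂μ)) :=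
  strong_law_ae_real (fun i ω ↦ f (X i ω)) hint
    (fun _ _ hij ↦ (hindep hij).comp hf hf) (fun i ↦ (hident i).comp hf)

end

lemma tendsto_zero_of_eventually_le_of_tendsto {α ι : Type*} {l : Filter α} {l' : Filter ι}
    [l'.NeBot] {a : α → ℝ} {b : ι → α → ℝ} {c : ι → ℝ} (ha : ∀ x, 0 ≤ a x)
    (hab : ∀ k, ∀ᶠ x in l, a x ≤ b k x) (hb : ∀ k, Tendsto (b k) l (𝓝 (c k)))
    (hc : Tendsto c l' (𝓝 0)) : Tendsto a l (𝓝 0) := by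
  refine tendsto_order.2 ⟨fun ε hε ↦ Eventually.of_forall fun x ↦ hε.trans_le (ha x), ?_⟩
  intro ε hε
  obtain ⟨k, hk⟩ := (hc.eventually_lt_const hε).exists
  filter_upwards [hab k, (hb k).eventually_lt_const hk] with x hle hlt
  exact hle.trans_lt hlt

theorem stmt19_general {Ω : Type*} [MeasurableSpace Ω] (P : Measure Ω)
    (Y : ℕ → Ω → ℝ)
    (hindep : ProbabilityTheory.iIndepFun Y P)
    (hid : ∀ i, ProbabilityTheory.IdentDistrib (Y i) (Y 0) P P)
    (hnonneg : ∀ i ω, 0 ≤ Y i ω)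
    (hint : Integrable (Y 0) P) :
    ∀ᵐ ω ∂P, Tendsto
      (fun n : ℕ => (1 / (n : ℝ)) * ∑ i ∈ Finset.range n,
        (if Real.sqrt n ≤ Y i ω then Y i ω else 0))
      atTop (nhds 0) := by
  have hslln : ∀ k : ℕ, ∀ᵐ ω ∂P, Tendsto
      (fun n : ℕ ↦ (∑ i ∈ Finset.range n, upperTail k (Y i ω)) / n) atTop
      (𝓝 (∫ ω, upperTail k (Y 0 ω) ∂P)) := fun k ↦
    strong_law_ae_comp (fun _ _ hij ↦ hindep.indepFun hij) hid (measurable_upperTail k)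
      (hint.upperTail k)
  have hsqrt : ∀ k : ℕ, ∀ᶠ n : ℕ in atTop, (k : ℝ) ≤ Real.sqrt n :=
    fun k ↦ (Real.tendsto_sqrt_atTop.comp tendsto_natCast_atTop_atTop).eventually_ge_atTop _
  filter_upwards [ae_all_iff.2 hslln] with ω hω
  refine tendsto_zero_of_eventually_le_of_tendsto (fun n ↦ ?_) (fun k ↦ ?_) hω
    ((tendsto_integral_upperTail hint).comp tendsto_natCast_atTop_atTop)
  · exact mul_nonneg (by positivity)
      (Finset.sum_nonneg fun i _ ↦ upperTail_nonneg (hnonneg i ω) _)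
  · filter_upwards [hsqrt k] with n hkn
    rw [one_div_mul_eq_div]
    gcongr with i
    exact antitone_upperTail (hnonneg i ω) hkn

/-- For i.i.d. nonnegative integrable `Y₁, Y₂, …`, the truncated averages
`(1/n) Σ_{i<n} 1{Y_i ≥ √n} Y_i` converge to `0` almost surely. -/
theorem stmt19 {Ω : Type*} [MeasurableSpace Ω] (P : Measure Ω) [IsProbabilityMeasure P]
    (Y : ℕ → Ω → ℝ) (hmeas : ∀ i, Measurable (Y i))
    (hindep : ProbabilityTheory.iIndepFun Y P)
    (hid : ∀ i, ProbabilityTheory.IdentDistrib (Y i) (Y 0) P P)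
    (hnonneg : ∀ i ω, 0 ≤ Y i ω)
    (hint : Integrable (Y 0) P) :
    ∀ᵐ ω ∂P, Tendsto
      (fun n : ℕ => (1 / (n : ℝ)) * ∑ i ∈ Finset.range n,
        (if Real.sqrt n ≤ Y i ω then Y i ω else 0))
      atTop (nhds 0) :=
  stmt19_general P Y hindep hid hnonneg hint
end
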